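/- arXiv:2406.11225 — 6 statements merged into one kernel-verified Lean document; each statement's English description precedes it below -/
import Mathlib

section
/- An alignment P of strings x and y is uniquely determined by its set of costly edges; that is, if two alignments of x and y have the same set of costly edges, then they are equal as paths. -/
/-- A single step in the edit-distance grid: horizontal, vertical, or diagonal. -/
def GridStep (p q : ℕ × ℕ) : Prop :=
  (q.1 = p.1 + 1 ∧ q.2 = p.2) ∨ (q.1 = p.1 ∧ q.2 = p.2 + 1) ∨
    (q.1 = p.1 + 1 ∧ q.2 = p.2 + 1)

/-- The list of (directed) edges of a path given as a list of vertices. -/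
def pathEdges (P : List (ℕ × ℕ)) : List ((ℕ × ℕ) × (ℕ × ℕ)) := P.zip P.tail

/-- A spanning path (alignment) of `Grid(x,y)`: a directed path from `(0,0)` to
`(|x|,|y|)` using grid steps. -/
def IsSpanningPath (m n : ℕ) (P : List (ℕ × ℕ)) : Prop :=
  P.head? = some (0, 0) ∧ P.getLast? = some (m, n) ∧ P.Chain' GridStep

/-- An edge is costly unless it is a diagonal edge `(i,j) → (i+1,j+1)` with
`x_{i+1} = y_{j+1}` (1-based indexing of the strings). -/
def IsCostly {α : Type*} (x y : List α) (e : (ℕ × ℕ) × (ℕ × ℕ)) : Prop :=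
  ¬ (e.2.1 = e.1.1 + 1 ∧ e.2.2 = e.1.2 + 1 ∧ x[e.1.1]? = y[e.1.2]?)

/-! Along a grid path `i + j` strictly increases, so an alignment visits each vertex once.
The only cost-free edge out of a vertex is the matching diagonal, so two alignments leaving the
same vertex take the same next step: if one of the two steps is costly, it is an edge of both
paths, and the source of a later edge differs from the current vertex. -/

namespace List

variable {V : Type*} {a b : V} {L : List V}

theorem fst_ne_of_mem_zip_tail (h : (a :: L).Nodup) {e : V × V} (he : e ∈ L.zip L.tail) :
    e.1 ≠ a := by
  rintro rfl
  exact (nodup_cons.1 h).1 (of_mem_zip he).1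

theorem eq_of_mem_zip_cons_cons (h : (a :: b :: L).Nodup) {d : V}
    (hd : (a, d) ∈ (a :: b :: L).zip (b :: L)) : d = b := by
  rw [zip_cons_cons, mem_cons] at hd
  rcases hd with hd | hd
  · exact (Prod.ext_iff.1 hd).2
  · exact absurd rfl (fst_ne_of_mem_zip_tail h hd)

theorem mem_zip_tail_iff (h : (a :: b :: L).Nodup) {e : V × V} :
    e ∈ (b :: L).zip L ↔ e ∈ (a :: b :: L).zip (b :: L) ∧ e.1 ≠ a := by
  rw [zip_cons_cons, mem_cons]
  constructor
  · exact fun he => ⟨Or.inr he, fst_ne_of_mem_zip_tail h he⟩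
  · rintro ⟨rfl | he, hne⟩
    exacts [absurd rfl hne, he]

theorem eq_of_nodup_of_costly_steps_iff {costly : V × V → Prop}
    (hfree : ∀ {a b c}, ¬ costly (a, b) → ¬ costly (a, c) → b = c) :
    ∀ {a : V} {P Q : List V}, (a :: P).Nodup → (a :: Q).Nodup →
      (a :: P).getLast? = (a :: Q).getLast? →
      (∀ e, costly e → (e ∈ (a :: P).zip P ↔ e ∈ (a :: Q).zip Q)) → P = Q := by
  intro a P
  induction P generalizing a with
  | nil =>
    rintro (_ | ⟨c, Q⟩) - hQ hlast -
    · rfl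
    · rw [getLast?_cons_cons] at hlast
      exact absurd (mem_of_getLast? hlast.symm) (nodup_cons.1 hQ).1
  | cons b P ih =>
    rintro (_ | ⟨c, Q⟩) hP hQ hlast h
    · rw [getLast?_cons_cons] at hlast
      exact absurd (mem_of_getLast? hlast) (nodup_cons.1 hP).1
    have hbc : b = c := by
      by_cases hb : costly (a, b)
      · exact eq_of_mem_zip_cons_cons hQ ((h _ hb).1 mem_cons_self)
      by_cases hc : costly (a, c)
      · exact (eq_of_mem_zip_cons_cons hP ((h _ hc).2 mem_cons_self)).symm
      exact hfree hb hc
    subst hbc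
    rw [getLast?_cons_cons, getLast?_cons_cons] at hlast
    congr 1
    refine ih hP.of_cons hQ.of_cons hlast fun e he => ?_
    rw [mem_zip_tail_iff hP, mem_zip_tail_iff hQ, h e he]

end List

theorem GridStep.sum_lt {p q : ℕ × ℕ} (h : GridStep p q) : p.1 + p.2 < q.1 + q.2 := by
  rcases h with ⟨h1, h2⟩ | ⟨h1, h2⟩ | ⟨h1, h2⟩ <;> omega

theorem IsSpanningPath.nodup {m n : ℕ} {P : List (ℕ × ℕ)} (hP : IsSpanningPath m n P) :
    P.Nodup := by
  have hsum : (P.map fun p => p.1 + p.2).IsChain (· < ·) :=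
    (List.isChain_map _).2 (hP.2.2.imp fun _ _ => GridStep.sum_lt)
  exact hsum.pairwise.nodup.of_map _

theorem eq_of_not_isCostly_of_not_isCostly {α : Type*} {x y : List α} {a b c : ℕ × ℕ}
    (hb : ¬ IsCostly x y (a, b)) (hc : ¬ IsCostly x y (a, c)) : b = c := by
  simp only [IsCostly, not_not] at hb hc
  exact Prod.ext (by omega) (by omega)

/-- An alignment of `x` and `y` is uniquely determined by its set of costly edges:
two alignments with the same set of costly edges are equal. -/
theorem alignment_determined_by_costly {α : Type*} (x y : List α) (P Q : List (ℕ × ℕ))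
    (hP : IsSpanningPath x.length y.length P) (hQ : IsSpanningPath x.length y.length Q)
    (h : {e | e ∈ pathEdges P ∧ IsCostly x y e} = {e | e ∈ pathEdges Q ∧ IsCostly x y e}) :
    P = Q := by
  obtain ⟨P, rfl⟩ := List.head?_eq_some_iff.1 hP.1
  obtain ⟨Q, rfl⟩ := List.head?_eq_some_iff.1 hQ.1
  congr 1
  refine List.eq_of_nodup_of_costly_steps_iff (costly := IsCostly x y)
    eq_of_not_isCostly_of_not_isCostly hP.nodup hQ.nodup (hP.2.1.trans hQ.2.1.symm)
    fun e he => ?_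
  simpa [he, pathEdges] using Set.ext_iff.1 h e
end

section
/- If P is an optimal (minimum-cost) alignment of x and y, and the box I×J is compatible with P (i.e., P passes through the points (min(I)-1, min(J)-1) and (max(I), max(J))), then the restriction of P to the box I×J is an optimal alignment for the edit-distance subproblem on the substrings x_I and y_J. -/
instance {α : Type*} [DecidableEq α] (x y : List α) (e : (ℕ × ℕ) × (ℕ × ℕ)) :
    Decidable (IsCostly x y e) := by unfold IsCostly; infer_instance

/-- The cost of a path: its number of costly edges. -/
def pathCost {α : Type*} [DecidableEq α] (x y : List α) (P : List (ℕ × ℕ)) : ℕ :=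
  (pathEdges P).countP (fun e => decide (IsCostly x y e))

/-- The restriction of a path `P` to the box `(a,b] × (c,d]`, shifted so that it becomes
a path of the grid of the substrings `x_{(a,b]}` and `y_{(c,d]}`. -/
def restrictShift (a b c d : ℕ) (P : List (ℕ × ℕ)) : List (ℕ × ℕ) :=
  (P.filter (fun p => decide (a ≤ p.1 ∧ p.1 ≤ b ∧ c ≤ p.2 ∧ p.2 ≤ d))).map
    (fun p => (p.1 - a, p.2 - c))

/-!
A grid path is strictly increasing in the product order, so the part of an optimal alignment
lying in the box `[a, b] × [c, d]` is exactly its subpath from `(a, c)` to `(b, d)`, and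
translating by `(a, c)` identifies this subpath with a path of the grid of the substrings,
of the same cost. If some alignment of the substrings were cheaper, splicing its translate
into the original path in place of that subpath would give a cheaper alignment of `x` and `y`.
-/

lemma GridStep.lt {p q : ℕ × ℕ} (h : GridStep p q) : p < q := by
  obtain ⟨p1, p2⟩ := p; obtain ⟨q1, q2⟩ := q
  simp only [GridStep, Prod.lt_iff] at *; omega

lemma gridStep_add_iff (s p q : ℕ × ℕ) : GridStep (s + p) (s + q) ↔ GridStep p q := by
  obtain ⟨s1, s2⟩ := s; obtain ⟨p1, p2⟩ := p; obtain ⟨q1, q2⟩ := q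
  simp only [GridStep, Prod.mk_add_mk]; omega

lemma List.IsChain.pairwise_lt_of_gridStep {P : List (ℕ × ℕ)} (h : P.IsChain GridStep) :
    P.Pairwise (· < ·) :=
  (h.imp fun _ _ => GridStep.lt).pairwise

def IsGridPath (u v : ℕ × ℕ) (P : List (ℕ × ℕ)) : Prop :=
  P.head? = some u ∧ P.getLast? = some v ∧ P.IsChain GridStep

namespace IsGridPath

variable {u v w z : ℕ × ℕ} {P L M M' R : List (ℕ × ℕ)}

lemma mem_Icc (hP : IsGridPath u v P) {p : ℕ × ℕ} (hp : p ∈ P) : p ∈ Set.Icc u v := by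
  obtain ⟨hu, hv, hc⟩ := hP
  have hlt := hc.pairwise_lt_of_gridStep
  constructor
  · obtain ⟨T, rfl⟩ : ∃ T, P = u :: T := List.head?_eq_some_iff.mp hu
    rcases List.mem_cons.mp hp with rfl | hp
    · exact le_rfl
    · exact ((List.pairwise_cons.mp hlt).1 p hp).le
  · obtain ⟨T, rfl⟩ := List.getLast?_eq_some_iff.mp hv
    rcases List.mem_append.mp hp with hp | hp
    · exact ((List.pairwise_append.mp hlt).2.2 p hp v (List.mem_singleton_self v)).le
    · exact (List.mem_singleton.mp hp).le

lemma map_add_iff (s : ℕ × ℕ) :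
    IsGridPath (s + u) (s + v) (P.map (s + ·)) ↔ IsGridPath u v P := by
  have hinj : Function.Injective (Option.map (s + ·)) :=
    Option.map_injective (add_right_injective s)
  simp only [IsGridPath, List.head?_map, List.getLast?_map, List.isChain_map, gridStep_add_iff]
  rw [← Option.map_some, hinj.eq_iff, ← Option.map_some, hinj.eq_iff]

lemma splice (hP : IsGridPath w z (L ++ M ++ R)) (hM : IsGridPath u v M)
    (hM' : IsGridPath u v M') : IsGridPath w z (L ++ M' ++ R) := by
  obtain ⟨hw, hz, hc⟩ := hP
  obtain ⟨hu, hv, -⟩ := hM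
  obtain ⟨hu', hv', hc'⟩ := hM'
  simp only [List.isChain_append, List.getLast?_append, List.head?_append, hu, hv] at hw hz hc
  refine ⟨?_, ?_, ?_⟩
  · simpa only [List.head?_append, hu'] using hw
  · simpa only [List.getLast?_append, hv'] using hz
  · simp only [List.isChain_append, List.getLast?_append, hu', hv']
    exact ⟨⟨hc.1.1, hc', hc.1.2.2⟩, hc.2.1, hc.2.2⟩

end IsGridPath

lemma isGridPath_map_add_iff (s : ℕ × ℕ) {k l : ℕ} {N : List (ℕ × ℕ)} :
    IsGridPath s (s + (k, l)) (N.map (s + ·)) ↔ IsSpanningPath k l N := by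
  have := IsGridPath.map_add_iff s (u := (0, 0)) (v := (k, l)) (P := N)
  rwa [Prod.mk_zero_zero, add_zero] at this

lemma List.IsChain.exists_isGridPath {P : List (ℕ × ℕ)} (hP : P.IsChain GridStep)
    {u v : ℕ × ℕ} (hu : u ∈ P) (hv : v ∈ P) (huv : u ≤ v) :
    ∃ L M R, P = L ++ M ++ R ∧ IsGridPath u v M ∧ (∀ p ∈ L, p < u) ∧ ∀ p ∈ R, v < p := by
  have hlt := hP.pairwise_lt_of_gridStep
  obtain ⟨L, T, rfl⟩ := List.append_of_mem hu
  have hvT : v ∈ u :: T := by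
    refine (List.mem_append.mp hv).resolve_left fun hvL => ?_
    exact not_le_of_gt ((List.pairwise_append.mp hlt).2.2 v hvL u List.mem_cons_self) huv
  obtain ⟨N, R, hNR⟩ := List.append_of_mem hvT
  have hhead : (N ++ [v]).head? = some u := by
    cases N <;> simp_all
  have hsplit : L ++ u :: T = L ++ (N ++ [v]) ++ R := by simp [hNR]
  rw [hsplit] at hP hlt
  refine ⟨L, N ++ [v], R, hsplit, ⟨hhead, List.getLast?_concat, hP.infix ⟨L, R, rfl⟩⟩, ?_, ?_⟩
  · exact fun p hp => (List.pairwise_append.mp (List.pairwise_append.mp hlt).1).2.2 p hp u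
      (List.mem_of_mem_head? hhead)
  · exact fun p hp => (List.pairwise_append.mp hlt).2.2 v (by simp) p hp

lemma pathEdges_append_cons (l : List (ℕ × ℕ)) (u : ℕ × ℕ) (r : List (ℕ × ℕ)) :
    pathEdges (l ++ u :: r) = pathEdges (l ++ [u]) ++ pathEdges (u :: r) := by
  induction l with
  | nil => simp [pathEdges]
  | cons p l ih =>
    cases l with
    | nil => rfl
    | cons q l => exact congrArg ((p, q) :: ·) ih

lemma pathEdges_map (f : ℕ × ℕ → ℕ × ℕ) (l : List (ℕ × ℕ)) :
    pathEdges (l.map f) = (pathEdges l).map (Prod.map f f) := by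
  rw [pathEdges, pathEdges, ← List.map_tail, List.zip_map]

lemma snd_mem_of_mem_pathEdges {l : List (ℕ × ℕ)} {e : (ℕ × ℕ) × (ℕ × ℕ)}
    (he : e ∈ pathEdges l) : e.2 ∈ l :=
  List.mem_of_mem_tail (List.of_mem_zip he).2

section Cost

variable {α : Type*} (x y : List α)

lemma isCostly_add_iff (a c k l : ℕ) {p q : ℕ × ℕ} (hq : q ≤ (k, l)) :
    IsCostly x y ((a, c) + p, (a, c) + q) ↔
      IsCostly ((x.drop a).take k) ((y.drop c).take l) (p, q) := by
  obtain ⟨p1, p2⟩ := p; obtain ⟨q1, q2⟩ := q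
  obtain ⟨hk, hl⟩ := Prod.mk_le_mk.mp hq
  simp only [IsCostly, Prod.mk_add_mk, not_iff_not]
  constructor
  · rintro ⟨h1, h2, h⟩
    refine ⟨by omega, by omega, ?_⟩
    rwa [List.getElem?_take_of_lt (by omega), List.getElem?_take_of_lt (by omega),
      List.getElem?_drop, List.getElem?_drop]
  · rintro ⟨h1, h2, h⟩
    rw [List.getElem?_take_of_lt (by omega), List.getElem?_take_of_lt (by omega),
      List.getElem?_drop, List.getElem?_drop] at h
    exact ⟨by omega, by omega, h⟩

variable [DecidableEq α]

lemma pathCost_append_cons (l : List (ℕ × ℕ)) (u : ℕ × ℕ) (r : List (ℕ × ℕ)) :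
    pathCost x y (l ++ u :: r) = pathCost x y (l ++ [u]) + pathCost x y (u :: r) := by
  rw [pathCost, pathEdges_append_cons, List.countP_append, pathCost, pathCost]

lemma pathCost_append_append (L R : List (ℕ × ℕ)) {M : List (ℕ × ℕ)} {u v : ℕ × ℕ}
    (hu : M.head? = some u) (hv : M.getLast? = some v) :
    pathCost x y (L ++ M ++ R) =
      pathCost x y (L ++ [u]) + pathCost x y M + pathCost x y (v :: R) := by
  obtain ⟨N, rfl⟩ := List.head?_eq_some_iff.mp hu
  obtain ⟨K, hK⟩ := List.getLast?_eq_some_iff.mp hv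
  have hNR : u :: (N ++ R) = K ++ v :: R := by rw [← List.cons_append, hK, List.append_assoc]; rfl
  rw [List.append_assoc, List.cons_append, pathCost_append_cons, hNR, pathCost_append_cons x y K,
    ← hK, Nat.add_assoc]

lemma pathCost_map_add (a c k l : ℕ) {N : List (ℕ × ℕ)} (hN : ∀ p ∈ N, p ≤ (k, l)) :
    pathCost x y (N.map ((a, c) + ·)) = pathCost ((x.drop a).take k) ((y.drop c).take l) N := by
  rw [pathCost, pathCost, pathEdges_map, List.countP_map]
  refine List.countP_congr fun e he => ?_
  obtain ⟨p, q⟩ := e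
  simpa using isCostly_add_iff x y a c k l (hN q (snd_mem_of_mem_pathEdges he))

end Cost

lemma pathCost_le_of_optimal {α : Type*} [DecidableEq α] {x y : List α}
    {m n : ℕ} {L M M' R : List (ℕ × ℕ)} {u v : ℕ × ℕ}
    (hP : IsSpanningPath m n (L ++ M ++ R))
    (hopt : ∀ Q, IsSpanningPath m n Q → pathCost x y (L ++ M ++ R) ≤ pathCost x y Q)
    (hM : IsGridPath u v M) (hM' : IsGridPath u v M') :
    pathCost x y M ≤ pathCost x y M' := by
  have hle := hopt _ (IsGridPath.splice hP hM hM')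
  rw [pathCost_append_append x y L R hM.1 hM.2.1,
    pathCost_append_append x y L R hM'.1 hM'.2.1] at hle
  omega

lemma restrictShift_append_map_add {a b c d : ℕ} {L M R : List (ℕ × ℕ)}
    (hL : ∀ p ∈ L, p < (a, c)) (hM : ∀ p ∈ M, (a, c) + p ≤ (b, d))
    (hR : ∀ p ∈ R, (b, d) < p) :
    restrictShift a b c d (L ++ M.map ((a, c) + ·) ++ R) = M := by
  have hL' : ∀ p ∈ L, ¬(a ≤ p.1 ∧ p.1 ≤ b ∧ c ≤ p.2 ∧ p.2 ≤ d) := fun p hp => by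
    have := Prod.lt_iff.mp (hL p hp); omega
  have hR' : ∀ p ∈ R, ¬(a ≤ p.1 ∧ p.1 ≤ b ∧ c ≤ p.2 ∧ p.2 ≤ d) := fun p hp => by
    have := Prod.lt_iff.mp (hR p hp); omega
  have hM' : ∀ q ∈ M.map ((a, c) + ·), a ≤ q.1 ∧ q.1 ≤ b ∧ c ≤ q.2 ∧ q.2 ≤ d := by
    simp only [List.mem_map]
    rintro _ ⟨p, hp, rfl⟩
    have := Prod.mk_le_mk.mp (hM p hp)
    simp only [Prod.fst_add, Prod.snd_add] at this ⊢
    omega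
  simp only [restrictShift, List.filter_append, List.map_append]
  rw [(List.filter_eq_nil_iff (l := L)).mpr (by simpa using hL'),
    (List.filter_eq_nil_iff (l := R)).mpr (by simpa using hR'),
    (List.filter_eq_self (l := M.map _)).mpr (by simpa using hM')]
  simp [Function.comp_def]

/-- If `P` is an optimal alignment of `x` and `y` and the box `(a,b] × (c,d]` is
compatible with `P` (i.e. `P` passes through `(a,c)` and `(b,d)`), then the restriction
of `P` to the box is an optimal alignment of the substrings `x_{(a,b]}` and `y_{(c,d]}`. -/
theorem restriction_of_optimal_is_optimal {α : Type*} [DecidableEq α] (x y : List α)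
    (P : List (ℕ × ℕ))
    (hP : IsSpanningPath x.length y.length P)
    (hopt : ∀ Q, IsSpanningPath x.length y.length Q → pathCost x y P ≤ pathCost x y Q)
    (a b c d : ℕ) (hab : a ≤ b) (hbx : b ≤ x.length) (hcd : c ≤ d) (hdy : d ≤ y.length)
    (hmem1 : (a, c) ∈ P) (hmem2 : (b, d) ∈ P) :
    IsSpanningPath ((x.drop a).take (b - a)).length ((y.drop c).take (d - c)).length
        (restrictShift a b c d P) ∧
      ∀ Q, IsSpanningPath ((x.drop a).take (b - a)).length ((y.drop c).take (d - c)).length Q →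
        pathCost ((x.drop a).take (b - a)) ((y.drop c).take (d - c)) (restrictShift a b c d P) ≤
          pathCost ((x.drop a).take (b - a)) ((y.drop c).take (d - c)) Q := by
  obtain ⟨L, M, R, rfl, hM, hL, hR⟩ :=
    List.IsChain.exists_isGridPath hP.2.2 hmem1 hmem2 (Prod.mk_le_mk.mpr ⟨hab, hcd⟩)
  obtain ⟨M₀, rfl⟩ : ∃ M₀, M = M₀.map ((a, c) + ·) :=
    ⟨M.map (· - (a, c)), by
      rw [List.map_map]; nth_rw 1 [← List.map_id M]
      exact List.map_congr_left fun p hp => (add_tsub_cancel_of_le (hM.mem_Icc hp).1).symm⟩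
  have hbd : (b, d) = (a, c) + (b - a, d - c) := by simp only [Prod.mk_add_mk]; congr <;> omega
  rw [hbd] at hM
  have hM₀ : IsSpanningPath (b - a) (d - c) M₀ := (isGridPath_map_add_iff (a, c)).mp hM
  have hM₀_le : ∀ p ∈ M₀, p ≤ (b - a, d - c) := fun p hp => (IsGridPath.mem_Icc hM₀ hp).2
  have hx : ((x.drop a).take (b - a)).length = b - a := by
    simp only [List.length_take, List.length_drop]; omega
  have hy : ((y.drop c).take (d - c)).length = d - c := by
    simp only [List.length_take, List.length_drop]; omega
  rw [hx, hy,
    restrictShift_append_map_add hL (fun p hp => hbd ▸ add_le_add_right (hM₀_le p hp) _) hR]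
  refine ⟨hM₀, fun Q hQ => ?_⟩
  rw [← pathCost_map_add x y a c _ _ hM₀_le,
    ← pathCost_map_add x y a c _ _ fun p hp => (IsGridPath.mem_Icc hQ hp).2]
  exact pathCost_le_of_optimal hP hopt hM ((isGridPath_map_add_iff (a, c)).mpr hQ)
end

section
/- Let Γ = F_p with p an odd prime, and for u ∈ Γ^D with D ⊆ Γ define the trace of u at index i as the 4-tuple (u_i, i·u_i, u_i², α^i·u_i). Then for any u,w ∈ Γ^D and any index i with u_i ≠ w_i, writing t = tr(u)_i − tr(w)_i (componentwise difference), we have t_value ≠ 0 and restore(t) := (t_product/t_value, (t_square + t_value²)/(2·t_value), (t_square − t_value²)/(2·t_value)) equals (i, u_i, w_i); moreover t = 0 whenever u_i = w_i. -/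
/-! Since `a² - b² = (a - b)(a + b)`, adding or subtracting `(a - b)²` gives `2a(a - b)` or
`2b(a - b)`; so when `a ≠ b` and `2` is invertible, the differences `a - b` and `a² - b²`
determine `a` and `b`, and `c` is read off `ca - cb`. -/

section RecoverFromDifferences

variable {K : Type*} [Field K] {a b : K}

theorem mul_sub_mul_div_sub_of_ne (c : K) (h : a ≠ b) : (c * a - c * b) / (a - b) = c := by
  rw [← mul_sub, mul_div_cancel_right₀ _ (sub_ne_zero.mpr h)]

theorem sq_sub_sq_add_sq_div_two_mul_sub (h2 : (2 : K) ≠ 0) (h : a ≠ b) :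
    ((a ^ 2 - b ^ 2) + (a - b) ^ 2) / (2 * (a - b)) = a := by
  rw [div_eq_iff (mul_ne_zero h2 (sub_ne_zero.mpr h))]
  ring

theorem sq_sub_sq_sub_sq_div_two_mul_sub (h2 : (2 : K) ≠ 0) (h : a ≠ b) :
    ((a ^ 2 - b ^ 2) - (a - b) ^ 2) / (2 * (a - b)) = b := by
  rw [div_eq_iff (mul_ne_zero h2 (sub_ne_zero.mpr h))]
  ring

end RecoverFromDifferences

theorem ZMod.two_ne_zero_of_ne_two (p : ℕ) [Fact p.Prime] (hp2 : p ≠ 2) : (2 : ZMod p) ≠ 0 :=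
  Ring.two_ne_zero (by rwa [ZMod.ringChar_zmod_n])

/-- For `Γ = F_p` with `p` an odd prime, the trace of `u` at index `i` (w.r.t. trace
parameter `α`) is the 4-tuple `(u_i, i·u_i, u_i², α^i·u_i)`.  For any `u, w` and any
mismatch index `i` (`u_i ≠ w_i`), the componentwise trace difference `t` has
`t_value ≠ 0` and `restore(t) = (i, u_i, w_i)`; moreover `t = 0` whenever `u_i = w_i`. -/
theorem trace_restore (p : ℕ) [hp : Fact p.Prime] (hp2 : p ≠ 2) (α : ZMod p)
    (u w : ℕ → ZMod p) (i : ℕ) :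
    (u i ≠ w i →
      u i - w i ≠ 0 ∧
      ((i : ZMod p) * u i - (i : ZMod p) * w i) / (u i - w i) = (i : ZMod p) ∧
      ((u i ^ 2 - w i ^ 2) + (u i - w i) ^ 2) / (2 * (u i - w i)) = u i ∧
      ((u i ^ 2 - w i ^ 2) - (u i - w i) ^ 2) / (2 * (u i - w i)) = w i) ∧
    (u i = w i →
      u i - w i = 0 ∧
      (i : ZMod p) * u i - (i : ZMod p) * w i = 0 ∧
      u i ^ 2 - w i ^ 2 = 0 ∧
      α ^ i * u i - α ^ i * w i = 0) := by
  have h2 := ZMod.two_ne_zero_of_ne_two p hp2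
  refine ⟨fun h => ⟨sub_ne_zero.mpr h, mul_sub_mul_div_sub_of_ne _ h,
    sq_sub_sq_add_sq_div_two_mul_sub h2 h, sq_sub_sq_sub_sq_div_two_mul_sub h2 h⟩, fun h => ?_⟩
  simp only [h, sub_self, and_self]
end

section
/- Fix a superposition hash h : D → S and strings u,w ∈ Γ^D. If the class h^{-1}(j) contains no mismatch index of (u,w), then the j-th component of the superposition trace difference Δ_{α,h}(u,w)_j is the zero trace vector; and if h^{-1}(j) contains exactly one mismatch index i, then restore(Δ_{α,h}(u,w)_j) = (i, u_i, w_i) for every choice of α. -/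
/-!
Every component of a trace vector has the form `f i (u i)`, so its superposition difference over
a class is `∑ (f i (u i) - f i (w i))`: terms at matching indices cancel, hence it vanishes when
the class has no mismatch and reduces to the term at `i₀` when `i₀` is its only mismatch.
Restoring from the surviving `(a - b, i₀ a - i₀ b, a² - b²)` with `a ≠ b` is then field
arithmetic, where halving needs `2 ≠ 0`, i.e. `p` odd.
-/

open Finset

/-- The class of indices (in `D`) hashed by `h` to bucket `j`. -/
def hashClass {S : Type*} [DecidableEq S] (D : Finset ℕ) (h : ℕ → S) (j : S) : Finset ℕ :=
  D.filter (fun i => h i = j)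

namespace Finset

variable {ι M R : Type*} [AddCommGroup R] {s : Finset ι} {u w : ι → M}

theorem sum_sub_eq_zero_of_eqOn (f : ι → M → R) (heq : ∀ i ∈ s, u i = w i) :
    ∑ i ∈ s, (f i (u i) - f i (w i)) = 0 :=
  sum_eq_zero fun i hi => by rw [heq i hi, sub_self]

theorem sum_sub_eq_of_unique_mismatch (f : ι → M → R) {i₀ : ι} (hi₀ : i₀ ∈ s)
    (huniq : ∀ i ∈ s, u i ≠ w i → i = i₀) :
    ∑ i ∈ s, (f i (u i) - f i (w i)) = f i₀ (u i₀) - f i₀ (w i₀) :=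
  sum_eq_single_of_mem i₀ hi₀ fun i hi hii => by
    rw [not_imp_comm.mp (huniq i hi) hii, sub_self]

end Finset

theorem restore_eq_of_ne {K : Type*} [Field K] (h2 : (2 : K) ≠ 0) (i a b : K) (hab : a ≠ b) :
    (i * a - i * b) / (a - b) = i ∧
    ((a ^ 2 - b ^ 2) + (a - b) ^ 2) / (2 * (a - b)) = a ∧
    ((a ^ 2 - b ^ 2) - (a - b) ^ 2) / (2 * (a - b)) = b := by
  have hab : a - b ≠ 0 := sub_ne_zero.mpr hab
  refine ⟨?_, ?_, ?_⟩ <;> field_simp <;> ring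

/-- Fix a superposition hash `h : D → S` and strings `u, w ∈ Γ^D` with `Γ = F_p`, `p` an
odd prime.  If the class `h⁻¹(j)` contains no mismatch index of `(u,w)`, then the `j`-th
component of the superposition trace difference `Δ_{α,h}(u,w)_j` is the zero trace
vector.  If `h⁻¹(j)` contains exactly one mismatch index `i₀`, then
`restore(Δ_{α,h}(u,w)_j) = (i₀, u_{i₀}, w_{i₀})`, for every choice of `α`. -/
theorem superposition_trace_recovery {S : Type*} [DecidableEq S]
    (p : ℕ) [hp : Fact p.Prime] (hp2 : p ≠ 2)
    (D : Finset ℕ) (h : ℕ → S) (α : ZMod p) (u w : ℕ → ZMod p) (j : S) :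
    ((∀ i ∈ hashClass D h j, u i = w i) →
      (∑ i ∈ hashClass D h j, (u i - w i)) = 0 ∧
      (∑ i ∈ hashClass D h j, ((i : ZMod p) * u i - (i : ZMod p) * w i)) = 0 ∧
      (∑ i ∈ hashClass D h j, (u i ^ 2 - w i ^ 2)) = 0 ∧
      (∑ i ∈ hashClass D h j, (α ^ i * u i - α ^ i * w i)) = 0) ∧
    (∀ i₀ ∈ hashClass D h j, u i₀ ≠ w i₀ →
      (∀ i ∈ hashClass D h j, u i ≠ w i → i = i₀) →
      (∑ i ∈ hashClass D h j, ((i : ZMod p) * u i - (i : ZMod p) * w i)) /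
          (∑ i ∈ hashClass D h j, (u i - w i)) = (i₀ : ZMod p) ∧
      ((∑ i ∈ hashClass D h j, (u i ^ 2 - w i ^ 2)) +
          (∑ i ∈ hashClass D h j, (u i - w i)) ^ 2) /
          (2 * ∑ i ∈ hashClass D h j, (u i - w i)) = u i₀ ∧
      ((∑ i ∈ hashClass D h j, (u i ^ 2 - w i ^ 2)) -
          (∑ i ∈ hashClass D h j, (u i - w i)) ^ 2) /
          (2 * ∑ i ∈ hashClass D h j, (u i - w i)) = w i₀) := by
  refine ⟨fun heq => ⟨?_, ?_, ?_, ?_⟩, fun i₀ hi₀ hne huniq => ?_⟩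
  · exact sum_sub_eq_zero_of_eqOn (fun _ x => x) heq
  · exact sum_sub_eq_zero_of_eqOn (fun (i : ℕ) x => (i : ZMod p) * x) heq
  · exact sum_sub_eq_zero_of_eqOn (fun _ x => x ^ 2) heq
  · exact sum_sub_eq_zero_of_eqOn (fun (i : ℕ) x => α ^ i * x) heq
  · have h2 : (2 : ZMod p) ≠ 0 := Ring.two_ne_zero (by rwa [ZMod.ringChar_zmod_n])
    rw [sum_sub_eq_of_unique_mismatch (fun _ x => x) hi₀ huniq,
      sum_sub_eq_of_unique_mismatch (fun (i : ℕ) x => (i : ZMod p) * x) hi₀ huniq,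
      sum_sub_eq_of_unique_mismatch (fun _ x => x ^ 2) hi₀ huniq]
    exact restore_eq_of_ne h2 _ _ _ hne
end

section
/- Let H be a pairwise independent family of hash functions from a set D to a set S, and let u,w ∈ Γ^D with Hamming distance Ham(u,w) ≤ K where |S| ≥ 4K. Then for every mismatch index i of (u,w), the probability over h ∼ H that there exists another mismatch index i' ≠ i with h(i') = h(i) is at most 1/4; consequently i is 3/4-recoverable (i.e., with probability at least 3/4, h^{-1}(h(i)) contains i as its unique mismatch index). -/
/-!
A mismatch index `i' ≠ i` collides with `i` with probability exactly `1/|S|`: summing the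
pairwise-independence identity `Pr[h(i') = b ∧ h(i) = b] = 1/|S|²` over the `|S|` values `b`.
A union bound over the at most `K` other mismatch indices bounds the probability of any
collision by `K/|S| ≤ 1/4`, and recoverability is the complementary event.
-/

open Finset

section UniformProb

variable {Ω : Type*} [Fintype Ω]

def uniformProb (p : Ω → Prop) [DecidablePred p] : ℚ :=
  (univ.filter p).card / Fintype.card Ω

theorem uniformProb_mono {p q : Ω → Prop} [DecidablePred p] [DecidablePred q]
    (hpq : ∀ ω, p ω → q ω) : uniformProb p ≤ uniformProb q := by
  unfold uniformProb
  gcongr with ω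
  exact hpq ω

theorem uniformProb_not [Nonempty Ω] (p : Ω → Prop) [DecidablePred p] :
    uniformProb (fun ω => ¬ p ω) = 1 - uniformProb p := by
  classical
  have hΩ : (Fintype.card Ω : ℚ) ≠ 0 := by positivity
  unfold uniformProb
  rw [filter_not, card_sdiff_of_subset (filter_subset _ _), card_univ,
    Nat.cast_sub (card_le_univ _), sub_div, div_self hΩ]

theorem uniformProb_exists_mem_le_sum {ι : Type*} (B : Finset ι) (q : ι → Ω → Prop)
    [∀ a, DecidablePred (q a)] :
    uniformProb (fun ω => ∃ a ∈ B, q a ω) ≤ ∑ a ∈ B, uniformProb (q a) := by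
  classical
  have hunion :
      univ.filter (fun ω => ∃ a ∈ B, q a ω) = B.biUnion (fun a => univ.filter (q a)) := by
    ext ω
    simp
  unfold uniformProb
  rw [← sum_div, hunion]
  gcongr
  exact_mod_cast card_biUnion_le

theorem uniformProb_eq_sum_fiber {S : Type*} [Fintype S] [DecidableEq S]
    (p : Ω → Prop) [DecidablePred p] (f : Ω → S) :
    uniformProb p = ∑ b, uniformProb (fun ω => p ω ∧ f ω = b) := by
  unfold uniformProb
  rw [← sum_div, card_eq_sum_card_fiberwise (f := f) (t := univ) (fun _ _ => mem_univ _)]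
  push_cast
  simp only [filter_filter]

end UniformProb

section PairwiseIndependent

variable {Ω D S : Type*} [Fintype Ω] [Fintype S] [DecidableEq S]

/-- A hash family with its distribution is modelled as `h : Ω → D → S`, with `ω` drawn
uniformly from `Ω`. -/
def IsPairwiseIndependent (h : Ω → D → S) : Prop :=
  ∀ a a' : D, a ≠ a' → ∀ b b' : S,
    uniformProb (fun ω => h ω a = b ∧ h ω a' = b') = 1 / (Fintype.card S : ℚ) ^ 2

theorem IsPairwiseIndependent.uniformProb_eq {h : Ω → D → S} (hpi : IsPairwiseIndependent h)
    {a a' : D} (ha : a ≠ a') :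
    uniformProb (fun ω => h ω a = h ω a') = 1 / Fintype.card S := by
  have hfiber : ∀ b, uniformProb (fun ω => h ω a = h ω a' ∧ h ω a' = b)
      = uniformProb (fun ω => h ω a = b ∧ h ω a' = b) := by
    intro b
    unfold uniformProb
    congr 3
    ext ω
    simp only [mem_filter, mem_univ, true_and]
    constructor
    · rintro ⟨haa', ha'b⟩
      exact ⟨haa'.trans ha'b, ha'b⟩
    · rintro ⟨hab, ha'b⟩
      exact ⟨hab.trans ha'b.symm, ha'b⟩
  rw [uniformProb_eq_sum_fiber _ (h · a'), Fintype.sum_congr _ _ hfiber,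
    Fintype.sum_congr _ _ (fun b => hpi a a' ha b b), sum_const, card_univ, nsmul_eq_mul,
    sq, mul_one_div, div_self_mul_self', one_div]

theorem IsPairwiseIndependent.uniformProb_exists_collision_le {h : Ω → D → S}
    (hpi : IsPairwiseIndependent h) {B : Finset D} {i : D} (hi : i ∉ B) :
    uniformProb (fun ω => ∃ a ∈ B, h ω a = h ω i) ≤ B.card / Fintype.card S := by
  calc uniformProb (fun ω => ∃ a ∈ B, h ω a = h ω i)
      ≤ ∑ a ∈ B, uniformProb (fun ω => h ω a = h ω i) := uniformProb_exists_mem_le_sum _ _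
    _ = ∑ _a ∈ B, 1 / (Fintype.card S : ℚ) :=
        sum_congr rfl fun a ha => hpi.uniformProb_eq (ne_of_mem_of_not_mem ha hi)
    _ = B.card / Fintype.card S := by rw [sum_const, nsmul_eq_mul, mul_one_div]

end PairwiseIndependent

theorem Nat.cast_div_le_one_div_of_mul_le {m n c : ℕ} (hc : 0 < c) (h : c * m ≤ n) :
    (m : ℚ) / n ≤ 1 / c := by
  rcases n.eq_zero_or_pos with rfl | hn
  · simp
  rw [div_le_div_iff₀ (by exact_mod_cast hn) (by exact_mod_cast hc)]
  exact_mod_cast (by linarith : m * c ≤ 1 * n)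

theorem pairwise_independent_recoverable_general
    {Ω D S Γ : Type*} [Fintype Ω] [Nonempty Ω] [Fintype D] [DecidableEq D]
    [Fintype S] [DecidableEq S] [DecidableEq Γ]
    (h : Ω → D → S)
    (hpi : ∀ a a' : D, a ≠ a' → ∀ b b' : S,
      ((Finset.univ.filter (fun ω : Ω => h ω a = b ∧ h ω a' = b')).card : ℚ) /
          (Fintype.card Ω) = 1 / ((Fintype.card S : ℚ)) ^ 2)
    (u w : D → Γ) (K : ℕ)
    (hham : (Finset.univ.filter (fun i : D => u i ≠ w i)).card ≤ K)
    (hS : 4 * K ≤ Fintype.card S)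
    (i : D) :
    ((Finset.univ.filter (fun ω : Ω =>
        ∃ i' : D, i' ≠ i ∧ u i' ≠ w i' ∧ h ω i' = h ω i)).card : ℚ) /
        (Fintype.card Ω) ≤ 1 / 4 ∧
    (3 : ℚ) / 4 ≤
      ((Finset.univ.filter (fun ω : Ω =>
          ∀ i' : D, h ω i' = h ω i → u i' ≠ w i' → i' = i)).card : ℚ) /
        (Fintype.card Ω) := by
  set others := (univ.filter (fun i' => u i' ≠ w i')).erase i
  have hcollision :
      uniformProb (fun ω => ∃ i', i' ≠ i ∧ u i' ≠ w i' ∧ h ω i' = h ω i) ≤ 1 / 4 :=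
    calc uniformProb (fun ω => ∃ i', i' ≠ i ∧ u i' ≠ w i' ∧ h ω i' = h ω i)
        ≤ uniformProb (fun ω => ∃ a ∈ others, h ω a = h ω i) :=
          uniformProb_mono fun ω ⟨i', hne, hmis, heq⟩ =>
            ⟨i', by simp [others, hne, hmis], heq⟩
      _ ≤ others.card / Fintype.card S :=
          IsPairwiseIndependent.uniformProb_exists_collision_le hpi (notMem_erase i _)
      _ ≤ K / Fintype.card S := by gcongr; exact (card_erase_le).trans hham
      _ ≤ 1 / 4 := by exact_mod_cast Nat.cast_div_le_one_div_of_mul_le (by norm_num) hS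
  refine ⟨hcollision, ?_⟩
  calc (3 : ℚ) / 4
      ≤ uniformProb (fun ω => ¬ ∃ i', i' ≠ i ∧ u i' ≠ w i' ∧ h ω i' = h ω i) := by
        rw [uniformProb_not]
        linarith
    _ ≤ _ := uniformProb_mono fun ω hω i' heq hmis => by
        by_contra hne
        exact hω ⟨i', hne, hmis, heq⟩

/-- Let `H` (modelled by a finite uniform randomness space `Ω` and `h : Ω → D → S`) be a
pairwise independent family of hash functions from `D` to `S`, and let `u, w ∈ Γ^D` with
`Ham(u,w) ≤ K` and `|S| ≥ 4K`.  Then for every mismatch index `i` of `(u,w)`: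
the probability that some other mismatch index collides with `i` under `h` is at most
`1/4`, and consequently `i` is `3/4`-recoverable, i.e. with probability at least `3/4`
the class `h⁻¹(h(i))` contains `i` as its unique mismatch index. -/
theorem pairwise_independent_recoverable
    {Ω D S Γ : Type*} [Fintype Ω] [Nonempty Ω] [Fintype D] [DecidableEq D]
    [Fintype S] [DecidableEq S] [DecidableEq Γ]
    (h : Ω → D → S)
    (hpi : ∀ a a' : D, a ≠ a' → ∀ b b' : S,
      ((Finset.univ.filter (fun ω : Ω => h ω a = b ∧ h ω a' = b')).card : ℚ) /
          (Fintype.card Ω) = 1 / ((Fintype.card S : ℚ)) ^ 2)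
    (u w : D → Γ) (K : ℕ)
    (hham : (Finset.univ.filter (fun i : D => u i ≠ w i)).card ≤ K)
    (hS : 4 * K ≤ Fintype.card S)
    (i : D) (hi : u i ≠ w i) :
    ((Finset.univ.filter (fun ω : Ω =>
        ∃ i' : D, i' ≠ i ∧ u i' ≠ w i' ∧ h ω i' = h ω i)).card : ℚ) /
        (Fintype.card Ω) ≤ 1 / 4 ∧
    (3 : ℚ) / 4 ≤
      ((Finset.univ.filter (fun ω : Ω =>
          ∀ i' : D, h ω i' = h ω i → u i' ≠ w i' → i' = i)).card : ℚ) /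
        (Fintype.card Ω) :=
  pairwise_independent_recoverable_general h hpi u w K hham hS i
end

section
/- Monotonicity of hierarchical loads in the truncation level: let load^{≤j} denote the load function on a tree induced by indicator leaf-values at level j (a node at level j gets value 1 iff the associated substrings of x and y differ, extended upward by load^{≤j}_v = min(κ_{|v|}, Σ_{children} load^{≤j})). If whenever the level-j substrings at a node differ, some descendant at any deeper level j' > j also has differing substrings, then for every node v at level ≤ j, load^{≤j}_v ≤ load^{≤j'}_v. -/
/-- The hierarchical load function on the tree `T(L^d)`: leaf value when no levels
remain, and `min(κ_{|v|}, Σ_{children} load)` at internal nodes. -/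
def hload {L : Type*} [Fintype L] (κ : ℕ → ℕ) (f : List L → ℕ) : ℕ → List L → ℕ
  | 0, v => f v
  | r + 1, v => min (κ v.length) (∑ a : L, hload κ f r (v ++ [a]))

/-- Monotonicity of hierarchical loads in the truncation level.  For strings `x, y` with
a common decomposition tree, `load^{≤j}` is the load induced by the indicator leaf
values at level `j` (value `1` at a level-`j` node iff the substrings of `x` and `y`
there differ).  If differing substrings at a node always propagate to some child (hence
to any deeper level), then for every node `v` at level `≤ j` and `j ≤ j' ≤ d`,
`load^{≤j}_v ≤ load^{≤j'}_v`. -/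
theorem load_monotone_in_truncation {L α : Type*} [Fintype L] [DecidableEq α]
    (d : ℕ) (κ : ℕ → ℕ) (hκmono : ∀ j, κ (j + 1) ≤ κ j) (hκ1 : 1 ≤ κ d)
    (sx sy : List L → List α)
    (hdesc : ∀ v : List L, v.length < d → sx v ≠ sy v →
      ∃ a : L, sx (v ++ [a]) ≠ sy (v ++ [a]))
    (j j' : ℕ) (hjj' : j ≤ j') (hj'd : j' ≤ d) :
    ∀ v : List L, v.length ≤ j →
      hload κ (fun u => if sx u = sy u then 0 else 1) (j - v.length) v ≤
        hload κ (fun u => if sx u = sy u then 0 else 1) (j' - v.length) v := by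
  have hpos : ∀ (r : ℕ) (v : List L), v.length + r ≤ d → sx v ≠ sy v →
      1 ≤ hload κ (fun u => if sx u = sy u then 0 else 1) r v := by
    intro r
    induction r with
    | zero => intro v _ hne; simp [hload, hne]
    | succ n ih =>
        intro v hle hne
        obtain ⟨a, ha⟩ := hdesc v (by omega) hne
        have h1 : 1 ≤ hload κ (fun u => if sx u = sy u then 0 else 1) n (v ++ [a]) := by
          apply ih
          · simp; omega
          · exact ha
        have hκ : 1 ≤ κ v.length := by
          have : κ d ≤ κ v.length :=
            antitone_nat_of_succ_le hκmono (by omega)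
          omega
        simp only [hload]
        refine le_min hκ ?_
        calc 1 ≤ hload κ (fun u => if sx u = sy u then 0 else 1) n (v ++ [a]) := h1
          _ ≤ _ := Finset.single_le_sum (f := fun i => hload κ (fun u => if sx u = sy u then 0 else 1) n (v ++ [i])) (fun i _ => Nat.zero_le _) (Finset.mem_univ a)
  intro v hv
  induction' hn : j - v.length with n ih generalizing v
  · have hvj : v.length = j := by omega
    simp only [hload]
    by_cases h : sx v = sy v
    · simp [h]
    · have h1 : 1 ≤ hload κ (fun u => if sx u = sy u then 0 else 1) (j' - v.length) v := by
        apply hpos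
        · omega
        · exact h
      simpa [h] using h1
  · have hlt : v.length < j := by omega
    have h2 : j' - v.length = (j' - (v.length + 1)) + 1 := by omega
    rw [h2]
    simp only [hload]
    refine min_le_min le_rfl (Finset.sum_le_sum fun a _ => ?_)
    have := ih (v ++ [a]) (by simp; omega) (by simp; omega)
    simpa using this
end
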